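/- arXiv:1903.11808 — 3 statements merged into one kernel-verified Lean document; each statement's English description precedes it below -/
import Mathlib

section
/- The function f(P,u) = log2(1 + Pβ/(uσ²)) + L[log2(u) − log2(e)(1 − 1/u)], for fixed P > 0, β > 0, σ² > 0, L ≥ 1, is minimized over u ≥ 1 at the unique u* > 1 satisfying the fixed-point equation u* = 1 + Pβ/(Lσ² + LPβ/u*); specifically f is monotonically decreasing in u on [1, u*] and monotonically increasing on [u*, ∞). -/
/-!
With `c = Pβ` and `s = σ²`, a direct computation gives
`f'(u) = G(u) / (u² (u s + c) log 2)` for the quadratic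
`G(u) = L (u - 1) (u s + c) - c u`, and for `u > 0` the fixed-point equation is `G(u) = 0`.
Since `G(1) = -c < 0`, the intermediate value theorem gives a root `u* > 1`, and then
`G(v) = (v - u*) (L s v + L c / u*)`, so for `v > 0` the sign of `f'(v)` is that of `v - u*`.
-/

open Real Set

namespace FixedPointMinimizer

variable {c s L u : ℝ}

/-- The function `f(P, u)` of the statement, with `c = Pβ` and `s = σ²`. -/
noncomputable def objective (c s L u : ℝ) : ℝ :=
  logb 2 (1 + c / (u * s)) + L * (logb 2 u - logb 2 (exp 1) * (1 - 1 / u))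

def stationarityPoly (c s L u : ℝ) : ℝ :=
  L * (u - 1) * (u * s + c) - c * u

lemma objective_eq_div_log_two (c s L u : ℝ) :
    objective c s L u = (log (1 + c / (u * s)) + L * (log u - (1 - 1 / u))) / log 2 := by
  simp only [objective, logb, log_exp]
  ring

lemma hasDerivAt_objective (hc : 0 < c) (hs : 0 < s) (hu : 0 < u) :
    HasDerivAt (objective c s L) (stationarityPoly c s L u / (u ^ 2 * (u * s + c) * log 2)) u := by
  have hu0 : u ≠ 0 := hu.ne'
  have hpos : 0 < 1 + c / (u * s) := by positivity
  have hquot : HasDerivAt (fun y => 1 + c / (y * s)) ((0 * (u * s) - c * s) / (u * s) ^ 2) u :=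
    ((hasDerivAt_const u c).div (hasDerivAt_mul_const s) (by positivity)).const_add 1
  have hrecip : HasDerivAt (fun y : ℝ => 1 - 1 / y) ((u ^ 2)⁻¹) u := by
    simpa [one_div] using (hasDerivAt_inv hu0).const_sub 1
  have h : HasDerivAt (fun y => (log (1 + c / (y * s)) + L * (log y - (1 - 1 / y))) / log 2)
      (((0 * (u * s) - c * s) / (u * s) ^ 2 / (1 + c / (u * s)) + L * (u⁻¹ - (u ^ 2)⁻¹)) / log 2) u :=
    ((hquot.log hpos.ne').add (((hasDerivAt_log hu0).sub hrecip).const_mul L)).div_const (log 2)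
  rw [show objective c s L = _ from funext (objective_eq_div_log_two c s L)]
  refine h.congr_deriv ?_
  have : u * s + c ≠ 0 := by positivity
  simp only [stationarityPoly]
  field_simp
  ring

lemma continuousOn_objective (hc : 0 < c) (hs : 0 < s) {D : Set ℝ} (hD : D ⊆ Ioi 0) :
    ContinuousOn (objective c s L) D := fun _ hx =>
  (hasDerivAt_objective (L := L) hc hs (hD hx)).continuousAt.continuousWithinAt

lemma eq_fixedPoint_iff_stationarityPoly_eq_zero (hc : 0 < c) (hs : 0 < s) (hL : 0 < L)
    (hu : 0 < u) : u = 1 + c / (L * s + L * c / u) ↔ stationarityPoly c s L u = 0 := by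
  have : L * s + L * c / u ≠ 0 := by positivity
  rw [stationarityPoly, eq_comm, ← sub_eq_zero]
  field_simp
  constructor <;> intro h <;> linear_combination -h

lemma exists_stationarityPoly_eq_zero (hc : 0 < c) (hs : 0 < s) (hL : 0 < L) :
    ∃ u, 1 < u ∧ stationarityPoly c s L u = 0 := by
  set t := c / (L * s)
  have ht : 0 < t := by positivity
  have hLst : L * s * t = c := by simp only [t]; field_simp
  have hcont : ContinuousOn (stationarityPoly c s L) (Icc 1 (1 + t)) := by
    unfold stationarityPoly; fun_prop
  have hzero : (0 : ℝ) ∈ Ioc (stationarityPoly c s L 1) (stationarityPoly c s L (1 + t)) := by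
    constructor
    · simp only [stationarityPoly]; linarith
    · have : stationarityPoly c s L (1 + t) = L * t * c := by
        simp only [stationarityPoly]; linear_combination (1 + t) * hLst
      rw [this]; positivity
  obtain ⟨u, hu, hGu⟩ := intermediate_value_Ioc (by linarith) hcont hzero
  exact ⟨u, hu.1, hGu⟩

lemma stationarityPoly_eq_mul (hu : u ≠ 0) (hG : stationarityPoly c s L u = 0) (v : ℝ) :
    stationarityPoly c s L v = (v - u) * (L * s * v + L * c / u) := by
  simp only [stationarityPoly] at hG ⊢
  field_simp
  linear_combination v * hG

section Root

variable (hc : 0 < c) (hs : 0 < s) (hL : 0 < L) (hu : 0 < u)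
  (hG : stationarityPoly c s L u = 0)
include hc hs hL hu hG

lemma eq_of_stationarityPoly_eq_zero {v : ℝ} (hv : 0 < v) (hGv : stationarityPoly c s L v = 0) :
    v = u := by
  rw [stationarityPoly_eq_mul hu.ne' hG] at hGv
  have : 0 < L * s * v + L * c / u := by positivity
  linarith [(mul_eq_zero.1 hGv).resolve_right this.ne']

lemma stationarityPoly_nonpos {x : ℝ} (hx : 0 < x) (hxu : x ≤ u) :
    stationarityPoly c s L x ≤ 0 := by
  rw [stationarityPoly_eq_mul hu.ne' hG]
  exact mul_nonpos_of_nonpos_of_nonneg (by linarith) (by positivity)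

lemma stationarityPoly_nonneg {x : ℝ} (hux : u ≤ x) : 0 ≤ stationarityPoly c s L x := by
  have hx : 0 < x := hu.trans_le hux
  rw [stationarityPoly_eq_mul hu.ne' hG]
  exact mul_nonneg (by linarith) (by positivity)

lemma antitoneOn_objective : AntitoneOn (objective c s L) (Ioc 0 u) := by
  refine antitoneOn_of_hasDerivWithinAt_nonpos (convex_Ioc 0 u)
    (continuousOn_objective hc hs fun _ hx => hx.1)
    (fun x hx => (hasDerivAt_objective hc hs (interior_subset hx).1).hasDerivWithinAt)
    fun x hx => ?_
  rw [interior_Ioc] at hx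
  have hx0 := hx.1
  exact div_nonpos_of_nonpos_of_nonneg
    (stationarityPoly_nonpos hc hs hL hu hG hx.1 hx.2.le) (by positivity)

lemma monotoneOn_objective : MonotoneOn (objective c s L) (Ici u) := by
  refine monotoneOn_of_hasDerivWithinAt_nonneg (convex_Ici u)
    (continuousOn_objective hc hs fun _ hx => hu.trans_le hx)
    (fun x hx => (hasDerivAt_objective hc hs (hu.trans_le (interior_subset hx))).hasDerivWithinAt)
    fun x hx => ?_
  have hx0 : 0 < x := hu.trans_le (interior_subset hx)
  exact div_nonneg (stationarityPoly_nonneg hc hs hL hu hG (interior_subset hx)) (by positivity)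

end Root

end FixedPointMinimizer

open FixedPointMinimizer

theorem stmt_0 (P β σ2 L : ℝ) (hP : 0 < P) (hβ : 0 < β) (hσ : 0 < σ2) (hL : 1 ≤ L) :
    ∃! ustar : ℝ,
      1 < ustar ∧
      ustar = 1 + P * β / (L * σ2 + L * P * β / ustar) ∧
      AntitoneOn (fun u : ℝ =>
          Real.logb 2 (1 + P * β / (u * σ2)) +
          L * (Real.logb 2 u - Real.logb 2 (Real.exp 1) * (1 - 1 / u)))
        (Set.Icc 1 ustar) ∧
      MonotoneOn (fun u : ℝ =>
          Real.logb 2 (1 + P * β / (u * σ2)) +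
          L * (Real.logb 2 u - Real.logb 2 (Real.exp 1) * (1 - 1 / u)))
        (Set.Ici ustar) := by
  have hc : 0 < P * β := mul_pos hP hβ
  have hL0 : 0 < L := one_pos.trans_le hL
  have hfix (v : ℝ) (hv : 0 < v) :
      v = 1 + P * β / (L * σ2 + L * P * β / v) ↔ stationarityPoly (P * β) σ2 L v = 0 := by
    rw [mul_assoc L P β]
    exact eq_fixedPoint_iff_stationarityPoly_eq_zero hc hσ hL0 hv
  obtain ⟨u, hu1, hG⟩ := exists_stationarityPoly_eq_zero hc hσ hL0
  have hu : 0 < u := one_pos.trans hu1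
  refine ⟨u, ⟨hu1, (hfix u hu).2 hG, ?_, monotoneOn_objective hc hσ hL0 hu hG⟩, ?_⟩
  · exact (antitoneOn_objective hc hσ hL0 hu hG).mono fun x hx => ⟨one_pos.trans_le hx.1, hx.2⟩
  · rintro v ⟨hv1, hv, -, -⟩
    have hv0 : 0 < v := one_pos.trans hv1
    exact eq_of_stationarityPoly_eq_zero hc hσ hL0 hu hG hv0 ((hfix v hv0).1 hv)
end

section
/- The partial derivative of f(P,u) = log2(1 + Pβ/(uσ²)) + L[log2(u) − log2(e)(1 − 1/u)] with respect to u vanishes at u if and only if u satisfies u = 1 + Pβ/(Lσ² + LPβ/u). -/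
/-!
Up to the factor `1 / log 2`, the derivative in `u` is `L (u - 1) / u² - Pβ / (u (uσ² + Pβ))`.
After clearing the (positive) denominators, both the vanishing of this expression and the
fixed-point equation become `L (u - 1) (uσ² + Pβ) = Pβ u`.
-/

open Real

theorem hasDerivAt_logb_one_add_div_mul (b : ℝ) {a c u : ℝ} (hu : u * c ≠ 0)
    (ha : u * c + a ≠ 0) :
    HasDerivAt (fun v => logb b (1 + a / (v * c))) (-(a / (u * (u * c + a))) / log b) u := by
  have hinner : HasDerivAt (fun v => 1 + a / (v * c)) (a * -c / (u * c) ^ 2) u := by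
    simpa [div_eq_mul_inv, neg_div, mul_comm, mul_assoc] using
      (((hasDerivAt_mul_const c).inv hu).const_mul a).const_add 1
  have hne : 1 + a / (u * c) ≠ 0 := by
    rwa [← div_self hu, ← add_div, div_ne_zero_iff, and_iff_left hu]
  refine ((hinner.log hne).div_const (log b)).congr_deriv ?_
  have hc : c ≠ 0 := right_ne_zero_of_mul hu
  have hu0 : u ≠ 0 := left_ne_zero_of_mul hu
  field_simp

theorem hasDerivAt_logb_sub_logb_exp_mul (b : ℝ) {u : ℝ} (hu : u ≠ 0) :
    HasDerivAt (fun v => logb b v - logb b (exp 1) * (1 - 1 / v)) ((u - 1) / u ^ 2 / log b) u := by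
  have hfun : (fun v => logb b v - logb b (exp 1) * (1 - 1 / v)) =
      fun v => (log v - (1 - v⁻¹)) / log b := by
    funext v
    simp only [logb, log_exp]
    ring
  rw [hfun]
  refine (((hasDerivAt_log hu).sub ((hasDerivAt_inv hu).const_sub 1)).div_const
    (log b)).congr_deriv ?_
  field_simp

theorem sub_div_eq_zero_iff_eq_one_add_div {L a c u : ℝ} (hL : L ≠ 0) (hu : u ≠ 0)
    (ha : u * c + a ≠ 0) :
    L * ((u - 1) / u ^ 2) - a / (u * (u * c + a)) = 0 ↔ u = 1 + a / (L * c + L * a / u) := by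
  have hden : L * c + L * a / u = L * (u * c + a) / u := by field_simp
  rw [hden, ← sub_eq_zero (a := u)]
  field_simp
  constructor <;> intro h <;> linear_combination h

theorem stmt_11 (P β σ2 L : ℝ) (hP : 0 < P) (hβ : 0 < β) (hσ : 0 < σ2) (hL : 1 ≤ L)
    (u : ℝ) (hu : 1 < u) :
    deriv (fun v : ℝ =>
        Real.logb 2 (1 + P * β / (v * σ2)) +
        L * (Real.logb 2 v - Real.logb 2 (Real.exp 1) * (1 - 1 / v))) u = 0 ↔
      u = 1 + P * β / (L * σ2 + L * P * β / u) := by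
  have hu0 : u ≠ 0 := by positivity
  have hden : u * σ2 + P * β ≠ 0 := by positivity
  have hderiv := (hasDerivAt_logb_one_add_div_mul 2 (by positivity) hden).add
    ((hasDerivAt_logb_sub_logb_exp_mul 2 hu0).const_mul L)
  have hlog2 : log 2 ≠ 0 := by positivity
  rw [(hderiv : HasDerivAt (fun v => _ + _) _ u).deriv, mul_assoc L P β,
    ← sub_div_eq_zero_iff_eq_one_add_div (by positivity) hu0 hden]
  rw [← mul_div_assoc, ← add_div, div_eq_zero_iff, or_iff_left hlog2, neg_add_eq_sub]
end

section
/- For the water-filling solution over M slots: minimizing Σₘ Pₘ subject to Σₘ log2(1 + βₘ Pₘ) ≥ C with Pₘ ≥ 0 and β₁ ≥ β₂ ≥ … ≥ β_M > 0, any optimal solution satisfies: if Pₘ > 0 and βₖ > βₘ then Pₖ > 0 (power is allocated to the better channels first). -/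
/-!
Exchange argument: if slot `m` carries power while a strictly better slot `k` carries none, move
the power of `m` to `k`, rescaled by `β m / β k` so that `k` receives the same SNR `β m * P m`.
Every rate term that depends only on the SNR is unchanged, while the total power drops by the
factor `β m / β k < 1` on that slot, contradicting optimality.
-/

open Function Finset

lemma Fintype.sum_apply_update {ι α G : Type*} [Fintype ι] [DecidableEq ι] [AddCommGroup G]
    (F : ι → α → G) (P : ι → α) (k : ι) (a : α) :
    ∑ i, F i (update P k a i) = ∑ i, F i (P i) - F k (P k) + F k a := by
  simp only [apply_update (fun i => F i), sum_update_of_mem (mem_univ k),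
    Fintype.sum_eq_add_sum_compl k (fun i => F i (P i)), compl_eq_univ_sdiff]
  abel

section PowerTransfer

variable {ι : Type*} [DecidableEq ι] (β P : ι → ℝ) (m k : ι)

noncomputable def transferPower : ι → ℝ :=
  update (update P m 0) k (β m / β k * P m)

variable {β P m k}

lemma transferPower_nonneg (hP : ∀ i, 0 ≤ P i) (hβm : 0 ≤ β m) (hβk : 0 ≤ β k) (i : ι) :
    0 ≤ transferPower β P m k i := by
  unfold transferPower
  rcases eq_or_ne i k with rfl | hik
  · simpa using mul_nonneg (div_nonneg hβm hβk) (hP m)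
  rcases eq_or_ne i m with rfl | him
  · simp [hik]
  · simpa [hik, him] using hP i

lemma sum_comp_mul_transferPower [Fintype ι] (g : ℝ → ℝ) (hkm : k ≠ m) (hPk : P k = 0) (hβk : β k ≠ 0) :
    ∑ i, g (β i * transferPower β P m k i) = ∑ i, g (β i * P i) := by
  have hsnr : β k * (β m / β k * P m) = β m * P m := by field_simp
  simp only [transferPower, Fintype.sum_apply_update (fun i x => g (β i * x)),
    update_of_ne hkm, hsnr, hPk, mul_zero]
  abel

lemma sum_transferPower_lt [Fintype ι] (hkm : k ≠ m) (hPk : P k = 0) (hPm : 0 < P m) (hβk : 0 < β k)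
    (hβ : β m < β k) :
    ∑ i, transferPower β P m k i < ∑ i, P i := by
  have hratio : β m / β k * P m < P m :=
    mul_lt_of_lt_one_left hPm ((div_lt_one hβk).mpr hβ)
  have hsum := Fintype.sum_apply_update (fun _ x => x) (update P m 0) k (β m / β k * P m)
  simp only [Fintype.sum_apply_update (fun _ x => x) P m, update_of_ne hkm, hPk] at hsum
  rw [transferPower, hsum]
  linarith

end PowerTransfer

theorem stmt_14_general (M : ℕ) (β : Fin M → ℝ) (hβ : ∀ m, 0 < β m) (C : ℝ)
    (Pv : Fin M → ℝ) (hPv : ∀ m, 0 ≤ Pv m)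
    (hfeas : C ≤ ∑ m, Real.logb 2 (1 + β m * Pv m))
    (hopt : ∀ Q : Fin M → ℝ, (∀ m, 0 ≤ Q m) →
      C ≤ ∑ m, Real.logb 2 (1 + β m * Q m) → ∑ m, Pv m ≤ ∑ m, Q m) :
    ∀ k m : Fin M, 0 < Pv m → β m < β k → 0 < Pv k := by
  intro k m hPm hβmk
  by_contra hPk
  have hPk : Pv k = 0 := le_antisymm (not_lt.mp hPk) (hPv k)
  have hkm : k ≠ m := fun h => hβmk.ne (congrArg β h).symm
  have hrate := sum_comp_mul_transferPower (fun x => Real.logb 2 (1 + x)) hkm hPk (hβ k).ne'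
  have hcheaper := sum_transferPower_lt hkm hPk hPm (hβ k) hβmk
  have hle := hopt (transferPower β Pv m k)
    (transferPower_nonneg hPv (hβ m).le (hβ k).le) (hrate ▸ hfeas)
  linarith

theorem stmt_14 (M : ℕ) (β : Fin M → ℝ) (hβ : ∀ m, 0 < β m) (C : ℝ) (hC : 0 < C)
    (Pv : Fin M → ℝ) (hPv : ∀ m, 0 ≤ Pv m)
    (hfeas : C ≤ ∑ m, Real.logb 2 (1 + β m * Pv m))
    (hopt : ∀ Q : Fin M → ℝ, (∀ m, 0 ≤ Q m) →
      C ≤ ∑ m, Real.logb 2 (1 + β m * Q m) → ∑ m, Pv m ≤ ∑ m, Q m) :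
    ∀ k m : Fin M, 0 < Pv m → β m < β k → 0 < Pv k :=
  stmt_14_general M β hβ C Pv hPv hfeas hopt
end
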